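/- arXiv:1609.05366 — 3 statements merged into one kernel-verified Lean document; each statement's English description precedes it below -/
import Mathlib

section
/- Let Δ be a simplicial complex on V = {1,…,n} that is a T-space, and let F ∈ Δ be a face. Let lk_Δ(F) = { G ∈ Δ : F ∪ G ∈ Δ and F ∩ G = ∅ } be the link of F in Δ. Then lk_Δ(F) satisfies the T-space separation property: for every pair G₁, G₂ ∈ lk_Δ(F) with G₂ ⊄ G₁, there exists a face H maximal under inclusion in lk_Δ(F) with G₁ ⊆ H and G₂ ⊄ H. -/
/-- A simplicial complex on the vertex set `Fin n`: a collection of finite subsets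
(faces) closed under taking subsets and containing every singleton. -/
def IsSimplicialComplex (n : ℕ) (Δ : Set (Finset (Fin n))) : Prop :=
  (∀ F ∈ Δ, ∀ G ⊆ F, G ∈ Δ) ∧ ∀ i : Fin n, ({i} : Finset (Fin n)) ∈ Δ

/-- A facet is a face maximal under inclusion. -/
def IsFacet {n : ℕ} (Δ : Set (Finset (Fin n))) (F : Finset (Fin n)) : Prop :=
  F ∈ Δ ∧ ∀ G ∈ Δ, F ⊆ G → G = F

/-- `Δ` is a T-space: any face `F` can be separated from any face `G ⊄ F` by a facet. -/
def IsTSpace {n : ℕ} (Δ : Set (Finset (Fin n))) : Prop :=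
  ∀ F ∈ Δ, ∀ G ∈ Δ, ¬ G ⊆ F → ∃ H : Finset (Fin n), IsFacet Δ H ∧ F ⊆ H ∧ ¬ G ⊆ H

/-- The link of a face `F` in `Δ`. -/
def link {n : ℕ} (Δ : Set (Finset (Fin n))) (F : Finset (Fin n)) : Set (Finset (Fin n)) :=
  { G | G ∈ Δ ∧ F ∪ G ∈ Δ ∧ F ∩ G = ∅ }

/-- The link of a face of a T-space satisfies the T-space separation property. -/
theorem link_isTSpace (n : ℕ) (Δ : Set (Finset (Fin n)))
    (hΔ : IsSimplicialComplex n Δ) (hT : IsTSpace Δ)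
    (F : Finset (Fin n)) (hF : F ∈ Δ) :
    ∀ G₁ ∈ link Δ F, ∀ G₂ ∈ link Δ F, ¬ G₂ ⊆ G₁ →
      ∃ H : Finset (Fin n), H ∈ link Δ F ∧
        (∀ H' ∈ link Δ F, H ⊆ H' → H' = H) ∧ G₁ ⊆ H ∧ ¬ G₂ ⊆ H := by
  rintro G₁ ⟨hG₁, hFG₁, hFG₁d⟩ G₂ ⟨hG₂, hFG₂, hFG₂d⟩ hns
  -- G₂ ⊄ F ∪ G₁
  have hns' : ¬ G₂ ⊆ F ∪ G₁ := by
    intro h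
    apply hns
    intro x hx
    rcases Finset.mem_union.1 (h hx) with hxF | hxG
    · exact absurd (Finset.mem_inter.2 ⟨hxF, hx⟩) (by simp [hFG₂d])
    · exact hxG
  obtain ⟨H, ⟨hHΔ, hHmax⟩, hsub, hnsub⟩ := hT (F ∪ G₁) hFG₁ G₂ hG₂ hns'
  have hFH : F ⊆ H := (Finset.union_subset_iff.1 hsub).1
  refine ⟨H \ F, ⟨hΔ.1 H hHΔ _ (Finset.sdiff_subset), ?_, ?_⟩, ?_, ?_, ?_⟩
  · have : F ∪ (H \ F) = H := Finset.union_sdiff_of_subset hFH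
    rw [this]; exact hHΔ
  · simp
  · rintro H' ⟨hH'Δ, hFH'Δ, hFH'd⟩ hsub'
    have hH : H ⊆ F ∪ H' := by
      intro x hx
      by_cases hxF : x ∈ F
      · exact Finset.mem_union_left _ hxF
      · exact Finset.mem_union_right _ (hsub' (Finset.mem_sdiff.2 ⟨hx, hxF⟩))
    have heq : F ∪ H' = H := hHmax _ hFH'Δ hH
    refine Finset.Subset.antisymm (fun x hx => ?_) hsub'
    have hxH : x ∈ H := heq ▸ Finset.mem_union_right _ hx
    refine Finset.mem_sdiff.2 ⟨hxH, fun hxF => ?_⟩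
    exact absurd (Finset.mem_inter.2 ⟨hxF, hx⟩) (by simp [hFH'd])
  · intro x hx
    refine Finset.mem_sdiff.2 ⟨hsub (Finset.mem_union_right _ hx), fun hxF => ?_⟩
    exact absurd (Finset.mem_inter.2 ⟨hxF, hx⟩) (by simp [hFG₁d])
  · intro h
    apply hnsub
    exact h.trans Finset.sdiff_subset
end

section
/- Let n ≥ 3 and let Δ be a simplicial complex on V = {1,…,n} all of whose faces have at most 2 elements (i.e. Δ is a graph). Then Δ is a T-space if and only if no vertex of Δ has degree exactly 1, where the degree of a vertex v is the number of 2-element faces of Δ containing v. -/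
/-- The degree of a vertex `v` in a graph `Δ`: the number of 2-element faces containing `v`. -/
noncomputable def vertexDegree {n : ℕ} (Δ : Set (Finset (Fin n))) (v : Fin n) : ℕ :=
  { F | F ∈ Δ ∧ F.card = 2 ∧ v ∈ F }.ncard

lemma edge_isFacet {n : ℕ} {Δ : Set (Finset (Fin n))}
    (hgraph : ∀ F ∈ Δ, F.card ≤ 2) {e : Finset (Fin n)} (he : e ∈ Δ)
    (hc : e.card = 2) : IsFacet Δ e := by
  refine ⟨he, fun G hG hsub => ?_⟩
  exact (Finset.eq_of_subset_of_card_le hsub (by rw [hc]; exact hgraph G hG)).symm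

/-- If no vertex has degree one, any face `G ⊄ {v}` can be separated from `v` by a
facet containing `v`. -/
lemma sep_lemma {n : ℕ} {Δ : Set (Finset (Fin n))} (hΔ : IsSimplicialComplex n Δ)
    (hgraph : ∀ F ∈ Δ, F.card ≤ 2) (hdeg : ∀ v : Fin n, vertexDegree Δ v ≠ 1)
    (v : Fin n) {G : Finset (Fin n)} (hG : G ∈ Δ) (hGv : ¬ G ⊆ {v}) :
    ∃ H : Finset (Fin n), IsFacet Δ H ∧ v ∈ H ∧ ¬ G ⊆ H := by
  set S : Set (Finset (Fin n)) := { F | F ∈ Δ ∧ F.card = 2 ∧ v ∈ F } with hSdef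
  have hfin : S.Finite := Set.toFinite S
  rcases Nat.lt_or_ge S.ncard 1 with h0 | h1
  · -- degree 0 : `{v}` is a facet
    have hS : S = ∅ := by
      rwa [Nat.lt_one_iff, Set.ncard_eq_zero hfin] at h0
    refine ⟨{v}, ⟨hΔ.2 v, fun K hK hsub => ?_⟩, Finset.mem_singleton_self v, hGv⟩
    have hKc := hgraph K hK
    rcases Nat.lt_or_ge K.card 2 with hlt | hge
    · exact (Finset.eq_of_subset_of_card_le hsub (by simpa using Nat.lt_succ_iff.mp hlt)).symm
    · exfalso
      have hK2 : K.card = 2 := le_antisymm hKc hge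
      have : K ∈ S := ⟨hK, hK2, hsub (Finset.mem_singleton_self v)⟩
      rw [hS] at this
      exact this
  · -- degree ≥ 2 : two distinct edges through `v`
    have h2 : 1 < S.ncard := lt_of_le_of_ne h1 (fun h => hdeg v h.symm)
    obtain ⟨e₁, e₂, he₁, he₂, hne⟩ := (Set.one_lt_ncard_iff hfin).mp h2
    have hinter : ¬ (G ⊆ e₁ ∧ G ⊆ e₂) := by
      rintro ⟨h₁, h₂⟩
      apply hGv
      intro x hx
      rw [Finset.mem_singleton]
      by_contra hxv
      -- then e₁ = {v, x} = e₂
      have hs1 : ({v, x} : Finset (Fin n)) ⊆ e₁ :=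
        Finset.insert_subset he₁.2.2 (Finset.singleton_subset_iff.mpr (h₁ hx))
      have hs2 : ({v, x} : Finset (Fin n)) ⊆ e₂ :=
        Finset.insert_subset he₂.2.2 (Finset.singleton_subset_iff.mpr (h₂ hx))
      have hcard : ({v, x} : Finset (Fin n)).card = 2 := by
        rw [Finset.card_insert_of_notMem (by simpa using Ne.symm hxv),
          Finset.card_singleton]
      have he1 : ({v, x} : Finset (Fin n)) = e₁ :=
        Finset.eq_of_subset_of_card_le hs1 (by rw [hcard, he₁.2.1])
      have he2 : ({v, x} : Finset (Fin n)) = e₂ :=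
        Finset.eq_of_subset_of_card_le hs2 (by rw [hcard, he₂.2.1])
      exact hne (he1 ▸ he2)
    rcases not_and_or.mp hinter with h | h
    · exact ⟨e₁, edge_isFacet hgraph he₁.1 he₁.2.1, he₁.2.2, h⟩
    · exact ⟨e₂, edge_isFacet hgraph he₂.1 he₂.2.1, he₂.2.2, h⟩

/-- A graph (a simplicial complex all of whose faces have at most two elements) on at
least three vertices is a T-space iff none of its vertices has degree exactly `1`. -/
theorem graph_isTSpace_iff_no_degree_one (n : ℕ) (hn : 3 ≤ n)
    (Δ : Set (Finset (Fin n))) (hΔ : IsSimplicialComplex n Δ)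
    (hgraph : ∀ F ∈ Δ, F.card ≤ 2) :
    IsTSpace Δ ↔ ∀ v : Fin n, vertexDegree Δ v ≠ 1 := by
  constructor
  · -- T-space ⟹ no vertex of degree 1
    intro hT v hdeg1
    obtain ⟨e, he⟩ := Set.ncard_eq_one.mp hdeg1
    have heS : e ∈ ({ F | F ∈ Δ ∧ F.card = 2 ∧ v ∈ F } : Set (Finset (Fin n))) := by
      rw [he]; exact rfl
    obtain ⟨heΔ, hec, hve⟩ := heS
    obtain ⟨H, hHfacet, hvH, hGH⟩ := hT {v} (hΔ.2 v) e heΔ (by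
      intro h
      have := Finset.card_le_card h
      rw [hec, Finset.card_singleton] at this
      omega)
    have hvH' : v ∈ H := hvH (Finset.mem_singleton_self v)
    have hHne : H ≠ {v} := by
      intro hHv
      have := hHfacet.2 e heΔ (by rw [hHv]; exact Finset.singleton_subset_iff.mpr hve)
      rw [this, hHv, Finset.card_singleton] at hec
      omega
    have hH2 : H.card = 2 := by
      have h1 : 1 ≤ H.card := Finset.card_pos.mpr ⟨v, hvH'⟩
      have h2 := hgraph H hHfacet.1
      rcases Nat.lt_or_ge H.card 2 with hlt | hge
      · exfalso
        apply hHne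
        have : H.card = 1 := by omega
        obtain ⟨a, ha⟩ := Finset.card_eq_one.mp this
        rw [ha] at hvH' ⊢
        rw [Finset.mem_singleton.mp hvH']
      · omega
    have : H ∈ ({ F | F ∈ Δ ∧ F.card = 2 ∧ v ∈ F } : Set (Finset (Fin n))) :=
      ⟨hHfacet.1, hH2, hvH'⟩
    rw [he, Set.mem_singleton_iff] at this
    exact hGH (this ▸ le_refl H)
  · -- no vertex of degree 1 ⟹ T-space
    intro hdeg F hF G hG hGF
    rcases Nat.lt_or_ge F.card 2 with hlt | hge
    · -- F is empty or a singleton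
      rcases Nat.lt_or_ge F.card 1 with h0 | h1
      · -- F = ∅
        have hFe : F = ∅ := Finset.card_eq_zero.mp (by omega)
        have hGne : G.Nonempty := by
          rw [Finset.nonempty_iff_ne_empty]
          intro h
          exact hGF (by rw [h, hFe])
        -- find a vertex not in G
        have hcompl : (Gᶜ : Finset (Fin n)).Nonempty := by
          rw [← Finset.card_pos, Finset.card_compl]
          have := hgraph G hG
          have hcu : Fintype.card (Fin n) = n := Fintype.card_fin n
          omega
        obtain ⟨v, hv⟩ := hcompl
        rw [Finset.mem_compl] at hv
        have hGv : ¬ G ⊆ {v} := by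
          intro h
          obtain ⟨x, hx⟩ := hGne
          exact hv (Finset.mem_singleton.mp (h hx) ▸ hx)
        obtain ⟨H, hHf, hvH, hGH⟩ := sep_lemma hΔ hgraph hdeg v hG hGv
        exact ⟨H, hHf, by rw [hFe]; exact Finset.empty_subset H, hGH⟩
      · -- F = {v}
        have : F.card = 1 := by omega
        obtain ⟨v, hv⟩ := Finset.card_eq_one.mp this
        subst hv
        obtain ⟨H, hHf, hvH, hGH⟩ := sep_lemma hΔ hgraph hdeg v hG hGF
        exact ⟨H, hHf, Finset.singleton_subset_iff.mpr hvH, hGH⟩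
    · -- F is an edge, hence itself a facet
      have hF2 : F.card = 2 := le_antisymm (hgraph F hF) hge
      exact ⟨F, edge_isFacet hgraph hF hF2, le_refl F, hGF⟩
end

section
/- Let K be a field of characteristic 0, V = {1,…,n}, S = K[x₁,…,xₙ], and let Δ be a simplicial complex on V that is a T-space, with Stanley–Reisner ideal I_Δ ⊆ S. For vectors a = (a₁,…,aₙ) and t = (t₁,…,tₙ) in ℕⁿ, let δ_{a,t} : S → S be the K-linear operator δ_{a,t}(p) = x₁^{a₁}⋯xₙ^{aₙ} · (∏_i 1/t_i!) · (∂^{t₁}/∂x₁^{t₁}) ⋯ (∂^{tₙ}/∂xₙ^{tₙ})(p), where ∂/∂x_i denotes the i-th partial derivative on S. Then δ_{a,t}(I_Δ) ⊆ I_Δ if and only if either the monomial x₁^{a₁}⋯xₙ^{aₙ} lies in I_Δ, or supp(t) ⊆ supp(a), where supp(c) = { i : c_i ≠ 0 }. -/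
open MvPolynomial

/-- The Stanley–Reisner (face) ideal of `Δ` over `K`. -/
noncomputable def stanleyReisnerIdeal (K : Type) [Field K] (n : ℕ) (Δ : Set (Finset (Fin n))) :
    Ideal (MvPolynomial (Fin n) K) :=
  Ideal.span { p | ∃ F : Finset (Fin n), F ∉ Δ ∧ p = ∏ i ∈ F, X i }

/-- The iterated partial derivative `(∂/∂x₁)^{t₁} ⋯ (∂/∂xₙ)^{tₙ}`. -/
noncomputable def iterPDeriv {K : Type} [CommSemiring K] {n : ℕ} (t : Fin n → ℕ)
    (p : MvPolynomial (Fin n) K) : MvPolynomial (Fin n) K :=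
  (List.finRange n).foldr (fun i q => (pderiv i)^[t i] q) p

/-- The divided-power differential operator
`δ_{a,t} = x₁^{a₁}⋯xₙ^{aₙ} · (∏ᵢ 1/tᵢ!) · (∂/∂x₁)^{t₁}⋯(∂/∂xₙ)^{tₙ}`. -/
noncomputable def dividedPowerOp (K : Type) [Field K] {n : ℕ} (a t : Fin n → ℕ)
    (p : MvPolynomial (Fin n) K) : MvPolynomial (Fin n) K :=
  C (((∏ i : Fin n, Nat.factorial (t i) : ℕ) : K))⁻¹ * (∏ i : Fin n, X i ^ a i) *
    iterPDeriv t p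

/-! On monomials, `δ_{a,t}` acts by `x^m ↦ (∏ᵢ binom(mᵢ, tᵢ)) x^(a + m - t)`, and `I_Δ` is spanned
by the monomials whose support is a nonface; given `supp x^a ∉ Δ` or `supp t ⊆ supp a`, the support
of the image contains that of `x^m` or of `x^a`, hence is again a nonface.
Conversely, if `supp a` is a face and `t_j ≠ 0 = a_j`, the T-space property gives a facet
`H ⊇ supp a` avoiding `j`. Then `x^t x_H ∈ I_Δ`, as its support contains the nonface `H ∪ {j}`, but
`δ_{a,t}` sends it to a nonzero multiple of `x^a x_H`, whose support is the face `H`. -/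

namespace MvPolynomial

variable {σ R : Type*} [CommSemiring R]

theorem pderiv_iterate_monomial (i : σ) (k : ℕ) (m : σ →₀ ℕ) (c : R) :
    (pderiv i)^[k] (monomial m c) =
      monomial (m - Finsupp.single i k) (c * (m i).descFactorial k) := by
  induction k with
  | zero => simp
  | succ k ih =>
    rw [Function.iterate_succ_apply', ih, pderiv_monomial, tsub_tsub, ← Finsupp.single_add,
      Finsupp.tsub_apply, Finsupp.single_eq_same, Nat.descFactorial_succ, Nat.cast_mul]
    congr 1
    ring

theorem list_sum_single_apply_of_notMem {l : List σ} {i : σ} (hi : i ∉ l) (t : σ → ℕ) :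
    (l.map fun j => Finsupp.single j (t j)).sum i = 0 := by
  rw [← Finsupp.applyAddHom_apply, map_list_sum, List.map_map]
  refine List.sum_eq_zero fun x hx => ?_
  obtain ⟨j, hj, rfl⟩ := List.mem_map.mp hx
  exact Finsupp.single_eq_of_ne (by rintro rfl; exact hi hj)

theorem foldr_pderiv_iterate_monomial {l : List σ} (hl : l.Nodup) (t : σ → ℕ) (m : σ →₀ ℕ)
    (c : R) :
    l.foldr (fun i q => (pderiv i)^[t i] q) (monomial m c) =
      monomial (m - (l.map fun i => Finsupp.single i (t i)).sum)
        (c * (l.map fun i => ((m i).descFactorial (t i) : R)).prod) := by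
  induction l with
  | nil => simp
  | cons i l ih =>
    obtain ⟨hi, hl⟩ := List.nodup_cons.mp hl
    rw [List.foldr_cons, ih hl, pderiv_iterate_monomial, Finsupp.tsub_apply,
      list_sum_single_apply_of_notMem hi, Nat.sub_zero, tsub_tsub, List.map_cons, List.sum_cons,
      List.map_cons, List.prod_cons, add_comm, mul_assoc, mul_comm (List.prod _)]

end MvPolynomial

section IterPDeriv

variable {R : Type} [CommSemiring R] {n : ℕ}

theorem iterPDeriv_monomial (t : Fin n → ℕ) (m : Fin n →₀ ℕ) (c : R) :
    iterPDeriv t (monomial m c) =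
      monomial (m - Finsupp.equivFunOnFinite.symm t)
        (c * ∏ i, ((m i).descFactorial (t i) : R)) := by
  rw [iterPDeriv, foldr_pderiv_iterate_monomial (List.nodup_finRange n),
    Finsupp.equivFunOnFinite_symm_eq_sum, Fin.sum_univ_def, Fin.prod_univ_def]

theorem iterPDeriv_eq_listProd (t : Fin n → ℕ) :
    iterPDeriv (K := R) t =
      ⇑((List.finRange n).map fun i => (pderiv i).toLinearMap ^ t i).prod := by
  funext p
  rw [iterPDeriv]
  induction List.finRange n with
  | nil => rfl
  | cons i l ih =>
    rw [List.foldr_cons, ih, List.map_cons, List.prod_cons, Module.End.mul_apply,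
      Module.End.coe_pow]
    rfl

end IterPDeriv

section DividedPowerOp

variable {K : Type} [Field K] {n : ℕ}

theorem dividedPowerOp_sum {α : Type*} (a t : Fin n → ℕ) (s : Finset α)
    (f : α → MvPolynomial (Fin n) K) :
    dividedPowerOp K a t (∑ x ∈ s, f x) = ∑ x ∈ s, dividedPowerOp K a t (f x) := by
  simp only [dividedPowerOp, iterPDeriv_eq_listProd, map_sum, Finset.mul_sum]

theorem prod_X_pow_eq_monomial_equivFunOnFinite (a : Fin n → ℕ) :
    ∏ i, (X i : MvPolynomial (Fin n) K) ^ a i =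
      monomial (Finsupp.equivFunOnFinite.symm a) 1 := by
  rw [prod_X_pow]
  exact congrArg (monomial · 1) (Finsupp.ext fun i => by simp)

theorem dividedPowerOp_monomial [CharZero K] (a t : Fin n → ℕ) (m : Fin n →₀ ℕ) (c : K) :
    dividedPowerOp K a t (monomial m c) =
      monomial (Finsupp.equivFunOnFinite.symm a + (m - Finsupp.equivFunOnFinite.symm t))
        (c * ∏ i, ((m i).choose (t i) : K)) := by
  have hfact : ∀ i, ((t i).factorial : K) ≠ 0 :=
    fun i => Nat.cast_ne_zero.mpr (Nat.factorial_ne_zero _)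
  simp only [dividedPowerOp, iterPDeriv_monomial, prod_X_pow_eq_monomial_equivFunOnFinite,
    C_mul_monomial, monomial_mul, Nat.descFactorial_eq_factorial_mul_choose, Nat.cast_mul,
    Nat.cast_prod, Finset.prod_mul_distrib]
  congr 1
  field_simp [Finset.prod_ne_zero_iff.mpr fun i _ => hfact i]

end DividedPowerOp

section StanleyReisner

variable {K : Type} [Field K] {n : ℕ} {Δ : Set (Finset (Fin n))}

theorem stanleyReisnerIdeal_eq_span_monomial (Δ : Set (Finset (Fin n))) :
    stanleyReisnerIdeal K n Δ =
      Ideal.span ((fun m => monomial m (1 : K)) ''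
        ((fun F => Finsupp.indicator F fun _ _ => 1) '' Δᶜ)) := by
  rw [stanleyReisnerIdeal, Set.image_image]
  congr 1
  ext p
  simp only [Set.mem_image, Set.mem_compl_iff]
  refine exists_congr fun F => and_congr_right fun _ => ?_
  rw [eq_comm, ← prod_X_pow (fun _ => 1)]
  simp only [pow_one]

theorem mem_stanleyReisnerIdeal_iff (hΔ : IsLowerSet Δ) {p : MvPolynomial (Fin n) K} :
    p ∈ stanleyReisnerIdeal K n Δ ↔ ∀ m ∈ p.support, m.support ∉ Δ := by
  rw [stanleyReisnerIdeal_eq_span_monomial, mem_ideal_span_monomial_image]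
  refine forall₂_congr fun m _ => ?_
  simp only [Set.exists_mem_image, Set.mem_compl_iff, Finsupp.le_def, Finsupp.indicator_apply]
  constructor
  · rintro ⟨F, hF, hle⟩ hm
    refine hF (hΔ (fun i hi => ?_) hm)
    simpa [hi, Nat.one_le_iff_ne_zero] using hle i
  · intro hm
    refine ⟨m.support, hm, fun i => ?_⟩
    split_ifs with hi
    · exact Nat.one_le_iff_ne_zero.mpr (Finsupp.mem_support_iff.mp hi)
    · exact Nat.zero_le _

theorem monomial_mem_stanleyReisnerIdeal_iff (hΔ : IsLowerSet Δ) {m : Fin n →₀ ℕ} {c : K} :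
    monomial m c ∈ stanleyReisnerIdeal K n Δ ↔ c = 0 ∨ m.support ∉ Δ := by
  rw [mem_stanleyReisnerIdeal_iff hΔ]
  rcases eq_or_ne c 0 with rfl | hc
  · simp
  · simp [hc]

end StanleyReisner

theorem IsSimplicialComplex.isLowerSet {n : ℕ} {Δ : Set (Finset (Fin n))}
    (hΔ : IsSimplicialComplex n Δ) : IsLowerSet Δ :=
  fun F G hGF hF => hΔ.1 F hF G hGF

theorem IsFacet.insert_notMem {n : ℕ} {Δ : Set (Finset (Fin n))} {H : Finset (Fin n)}
    (hH : IsFacet Δ H) {j : Fin n} (hj : j ∉ H) : insert j H ∉ Δ :=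
  fun h => hj (hH.2 _ h (Finset.subset_insert j H) ▸ Finset.mem_insert_self j H)

theorem IsTSpace.exists_facet_notMem {n : ℕ} {Δ : Set (Finset (Fin n))} (hT : IsTSpace Δ)
    {F : Finset (Fin n)} (hF : F ∈ Δ) {j : Fin n} (hj : {j} ∈ Δ) (hjF : j ∉ F) :
    ∃ H, IsFacet Δ H ∧ F ⊆ H ∧ j ∉ H := by
  simpa using hT F hF {j} hj (by simpa using hjF)

section Idealizer

variable {K : Type} [Field K] [CharZero K] {n : ℕ} {Δ : Set (Finset (Fin n))}

theorem dividedPowerOp_monomial_mem_of_support_notMem (hΔ : IsLowerSet Δ) {a : Fin n → ℕ}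
    (ha : (Finsupp.equivFunOnFinite.symm a).support ∉ Δ) (t : Fin n → ℕ) (m : Fin n →₀ ℕ)
    (c : K) :
    dividedPowerOp K a t (monomial m c) ∈ stanleyReisnerIdeal K n Δ := by
  rw [dividedPowerOp_monomial, monomial_mem_stanleyReisnerIdeal_iff hΔ]
  refine Or.inr fun h => ha (hΔ (fun i => ?_) h)
  simp only [Finsupp.mem_support_iff, Finsupp.coe_add, Pi.add_apply]
  omega

theorem dividedPowerOp_monomial_mem_of_support_subset (hΔ : IsLowerSet Δ) {a t : Fin n → ℕ}
    (hta : {i | t i ≠ 0} ⊆ {i | a i ≠ 0}) {m : Fin n →₀ ℕ} (hm : m.support ∉ Δ) (c : K) :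
    dividedPowerOp K a t (monomial m c) ∈ stanleyReisnerIdeal K n Δ := by
  rw [dividedPowerOp_monomial, monomial_mem_stanleyReisnerIdeal_iff hΔ]
  by_cases hle : ∀ i, t i ≤ m i
  · refine Or.inr fun h => hm (hΔ (fun i => ?_) h)
    have hti : t i ≠ 0 → a i ≠ 0 := @hta i
    simp only [Finsupp.mem_support_iff, Finsupp.coe_add, Finsupp.coe_tsub, Pi.add_apply,
      Pi.sub_apply, Finsupp.coe_equivFunOnFinite_symm]
    have := hle i
    omega
  · obtain ⟨i, hi⟩ := not_forall.mp hle
    exact Or.inl (mul_eq_zero_of_right _ (Finset.prod_eq_zero (Finset.mem_univ i)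
      (by rw [Nat.choose_eq_zero_of_lt (not_le.mp hi), Nat.cast_zero])))

theorem exists_mem_dividedPowerOp_notMem (hΔ : IsSimplicialComplex n Δ) (hT : IsTSpace Δ)
    {a t : Fin n → ℕ} (ha : (Finsupp.equivFunOnFinite.symm a).support ∈ Δ) {j : Fin n}
    (haj : a j = 0) (htj : t j ≠ 0) :
    ∃ p ∈ stanleyReisnerIdeal K n Δ, dividedPowerOp K a t p ∉ stanleyReisnerIdeal K n Δ := by
  have hlower := hΔ.isLowerSet
  obtain ⟨H, hH, haH, hjH⟩ := hT.exists_facet_notMem ha (hΔ.2 j) (by simpa using haj)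
  set χ : Fin n →₀ ℕ := Finsupp.indicator H fun _ _ => 1
  have hχ : ∀ i, χ i = if i ∈ H then 1 else 0 := fun i => by simp [χ, Finsupp.indicator_apply]
  refine ⟨monomial (Finsupp.equivFunOnFinite.symm t + χ) 1, ?_, ?_⟩
  · rw [monomial_mem_stanleyReisnerIdeal_iff hlower]
    refine Or.inr fun h => hH.insert_notMem hjH (hlower (fun i hi => ?_) h)
    have := hχ i
    rcases Finset.mem_insert.mp hi with rfl | hi <;> simp_all
  · rw [dividedPowerOp_monomial, add_tsub_cancel_left,
      monomial_mem_stanleyReisnerIdeal_iff hlower]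
    rintro (hcoeff | hsupp)
    · refine Finset.prod_ne_zero_iff.mpr (fun i _ => ?_) ((one_mul _).symm.trans hcoeff)
      exact Nat.cast_ne_zero.mpr (Nat.choose_pos (Nat.le_add_right _ _)).ne'
    · refine hsupp (Eq.subst (motive := (· ∈ Δ)) ?_ hH.1)
      ext i
      have hai : a i ≠ 0 → i ∈ H := fun h => haH (by simpa using h)
      by_cases hi : i ∈ H <;> simp_all

end Idealizer

/-- (Traves) For a T-space, the operator `δ_{a,t}` preserves the Stanley–Reisner ideal
iff the monomial `x^a` lies in the ideal or `supp t ⊆ supp a`. -/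
theorem dividedPowerOp_mem_idealizer_iff (K : Type) [Field K] [CharZero K] (n : ℕ)
    (Δ : Set (Finset (Fin n))) (hΔ : IsSimplicialComplex n Δ) (hT : IsTSpace Δ)
    (a t : Fin n → ℕ) :
    (∀ p ∈ stanleyReisnerIdeal K n Δ, dividedPowerOp K a t p ∈ stanleyReisnerIdeal K n Δ) ↔
      ((∏ i : Fin n, (X i : MvPolynomial (Fin n) K) ^ a i) ∈ stanleyReisnerIdeal K n Δ ∨
        { i : Fin n | t i ≠ 0 } ⊆ { i : Fin n | a i ≠ 0 }) := by
  have hlower := hΔ.isLowerSet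
  rw [prod_X_pow_eq_monomial_equivFunOnFinite, monomial_mem_stanleyReisnerIdeal_iff hlower,
    or_iff_right one_ne_zero]
  constructor
  · intro h
    by_contra hc
    obtain ⟨ha, hta⟩ := not_or.mp hc
    obtain ⟨j, htj, haj⟩ := Set.not_subset.mp hta
    obtain ⟨p, hp, hδp⟩ :=
      exists_mem_dividedPowerOp_notMem (K := K) hΔ hT (not_not.mp ha) (not_not.mp haj) htj
    exact hδp (h p hp)
  · intro h p hp
    rw [p.as_sum, dividedPowerOp_sum]
    refine Ideal.sum_mem _ fun m hm => ?_
    rcases h with ha | hta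
    · exact dividedPowerOp_monomial_mem_of_support_notMem hlower ha t m _
    · exact dividedPowerOp_monomial_mem_of_support_subset hlower hta
        ((mem_stanleyReisnerIdeal_iff hlower).mp hp m hm) _
end
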